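/- arXiv:2412.15044 — 3 statements merged into one kernel-verified Lean document; each statement's English description precedes it below -/
import Mathlib

section
/- Let X be a random vector with isotropic law μ on ℝⁿ, Z an independent standard Gaussian, s > 0, and E ⊆ ℝⁿ a linear subspace with orthogonal projection P = Proj_E. Then P · E[Cov(X | X + √s Z)] · P ≤ E[Cov(P X | P X + √s P Z)]. -/
open MeasureTheory ProbabilityTheory

lemma my_memℒp_two_condexp {α : Type*} {m m0 : MeasurableSpace α} {μ : Measure α}
    [IsFiniteMeasure μ] (hm : m ≤ m0) {f : α → ℝ} (hf : MemLp f 2 μ) :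
    MemLp (μ[f|m]) 2 μ := by
  have hfi : Integrable f μ := hf.integrable one_le_two
  have h : (condExpL2 ℝ ℝ hm (hf.toLp f) : α → ℝ) =ᵐ[μ] μ[f|m] :=
    ae_eq_condExp_of_forall_setIntegral_eq hm hfi
      (fun s hs hμs => integrableOn_condExpL2_of_measure_ne_top hm hμs.ne _)
      (fun s hs hμs => by
        rw [integral_condExpL2_eq hm (hf.toLp f) hs hμs.ne]
        exact setIntegral_congr_ae (hm s hs) ((hf.coeFn_toLp).mono fun x hx _ => hx))
      (aestronglyMeasurable_condExpL2 hm _)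
  exact (Lp.memLp _).ae_eq h

lemma my_integrable_mul {α : Type*} {m0 : MeasurableSpace α} {μ : Measure α}
    {u w : α → ℝ} (hu : MemLp u 2 μ) (hw : MemLp w 2 μ) :
    Integrable (fun x => u x * w x) μ := by
  have h : MemLp (u • w) 1 μ := hw.smul hu
  exact memLp_one_iff_integrable.mp h

lemma my_integral_sq_condexp_le {α : Type*} {m2 m1 m0 : MeasurableSpace α} {μ : Measure α}
    [IsFiniteMeasure μ] (h21 : m2 ≤ m1) (h10 : m1 ≤ m0) {f : α → ℝ} (hf : MemLp f 2 μ) :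
    ∫ x, (μ[f|m2]) x ^ 2 ∂μ ≤ ∫ x, (μ[f|m1]) x ^ 2 ∂μ := by
  set g := μ[f|m1] with hgdef
  set h := μ[f|m2] with hhdef
  have hg2 : MemLp g 2 μ := my_memℒp_two_condexp h10 hf
  have hh2 : MemLp h 2 μ := my_memℒp_two_condexp (h21.trans h10) hf
  have hgi : Integrable g μ := hg2.integrable one_le_two
  have htow : μ[g|m2] =ᵐ[μ] h := condExp_condExp_of_le h21 h10
  have hhg_int : Integrable (fun x => h x * g x) μ := my_integrable_mul hh2 hg2
  have hpull : μ[fun x => h x * g x|m2] =ᵐ[μ] fun x => h x * (μ[g|m2]) x := by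
    have := condExp_mul_of_stronglyMeasurable_left (μ := μ) (m := m2) (g := g)
      (stronglyMeasurable_condExp (f := f)) (by exact hhg_int) hgi
    exact this
  have hkey : ∫ x, h x * g x ∂μ = ∫ x, h x ^ 2 ∂μ := by
    rw [← integral_condExp (h21.trans h10) (f := fun x => h x * g x)]
    refine integral_congr_ae (hpull.trans ?_)
    filter_upwards [htow] with x hx
    rw [hx]; ring
  have hgsq : Integrable (fun x => g x ^ 2) μ := hg2.integrable_sq
  have hhsq : Integrable (fun x => h x ^ 2) μ := hh2.integrable_sq
  have hnn : 0 ≤ ∫ x, (g x - h x) ^ 2 ∂μ := integral_nonneg fun x => sq_nonneg _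
  have hexp : ∫ x, (g x - h x) ^ 2 ∂μ
      = ∫ x, g x ^ 2 ∂μ - 2 * ∫ x, h x * g x ∂μ + ∫ x, h x ^ 2 ∂μ := by
    have hi2 : Integrable (fun x => 2 * (h x * g x)) μ := hhg_int.const_mul 2
    have hi1 : Integrable (fun x => g x ^ 2 - 2 * (h x * g x)) μ := hgsq.sub hi2
    have hfe : ∫ x, (g x - h x) ^ 2 ∂μ
        = ∫ x, (g x ^ 2 - 2 * (h x * g x)) + h x ^ 2 ∂μ := by
      refine integral_congr_ae (Filter.Eventually.of_forall fun x => ?_); ring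
    rw [hfe, integral_add hi1 hhsq, integral_sub hgsq hi2, integral_const_mul]
  rw [hexp, hkey] at hnn
  linarith

lemma my_integral_sq_sum {α : Type*} {m0 : MeasurableSpace α} {μ : Measure α} {n : ℕ}
    (w : Fin n → ℝ) (u : Fin n → α → ℝ) (hu : ∀ i, MemLp (u i) 2 μ) :
    ∫ x, (∑ i, w i * u i x) ^ 2 ∂μ
      = ∑ i, ∑ j, (w i * w j) * ∫ x, u i x * u j x ∂μ := by
  have hexp : (fun x => (∑ i, w i * u i x) ^ 2)
      = fun x => ∑ i, ∑ j, (w i * w j) * (u i x * u j x) := by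
    funext x
    rw [sq, Finset.sum_mul_sum]
    exact Finset.sum_congr rfl fun i _ => Finset.sum_congr rfl fun j _ => by ring
  rw [hexp, integral_finset_sum _ fun i _ => integrable_finset_sum _ fun j _ =>
    (my_integrable_mul (hu i) (hu j)).const_mul _]
  refine Finset.sum_congr rfl fun i _ => ?_
  rw [integral_finset_sum _ fun j _ => (my_integrable_mul (hu i) (hu j)).const_mul _]
  exact Finset.sum_congr rfl fun j _ => integral_const_mul _ _

lemma my_condexp_lincomb {α : Type*} {m m0 : MeasurableSpace α} {μ : Measure α}
    [IsFiniteMeasure μ] {n : ℕ}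
    (w : Fin n → ℝ) (u : Fin n → α → ℝ) (hu : ∀ i, Integrable (u i) μ) :
    μ[fun x => ∑ i, w i * u i x|m] =ᵐ[μ] fun x => ∑ i, w i * (μ[u i|m]) x := by
  have h1 : μ[fun x => ∑ i, w i * u i x|m]
      =ᵐ[μ] ∑ i : Fin n, μ[fun x => w i * u i x|m] := by
    have h := condExp_finset_sum (μ := μ) (m := m) (s := Finset.univ)
      (f := fun i x => w i * u i x) (fun i _ => (hu i).const_mul _)
    have he : (fun x => ∑ i, w i * u i x) = ∑ i : Fin n, fun x => w i * u i x := by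
      funext x; simp
    rw [he]; exact h
  have h2 : ∀ i : Fin n, μ[fun x => w i * u i x|m] =ᵐ[μ] fun x => w i * (μ[u i|m]) x := by
    intro i
    have := condExp_smul (μ := μ) (m := m) (w i) (u i)
    exact this
  refine h1.trans ?_
  have h3 : (∑ i : Fin n, μ[fun x => w i * u i x|m])
      =ᵐ[μ] ∑ i : Fin n, fun x => w i * (μ[u i|m]) x := by
    exact eventuallyEq_sum (fun i _ => h2 i)
  refine h3.trans ?_
  filter_upwards with x
  simp

/-- For isotropic `X`, independent standard Gaussian `Z`, `s > 0` and a subspace `E` with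
orthogonal projection `P`, one has
`P · E[Cov(X | X + √s Z)] · P ≤ E[Cov(P X | P X + √s P Z)]` in the psd order. -/
theorem stmt8 (n : ℕ) {Ω : Type*} {m0 : MeasurableSpace Ω} (P : Measure Ω)
    [IsProbabilityMeasure P]
    (X Z : Ω → EuclideanSpace ℝ (Fin n)) (hX : Measurable X) (hZ : Measurable Z)
    (hindep : IndepFun X Z P)
    (hXcent : ∫ ω, X ω ∂P = 0)
    (hXL2 : ∀ i : Fin n, MemLp (fun ω => X ω i) 2 P)
    (hXcov : ∀ i j : Fin n, ∫ ω, X ω i * X ω j ∂P = if i = j then 1 else 0)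
    (hZlaw : Measure.map Z P =
      Measure.map (MeasurableEquiv.toLp 2 (Fin n → ℝ))
        (Measure.pi fun _ : Fin n => gaussianReal 0 1))
    (s : ℝ) (hs : 0 < s)
    (E : Submodule ℝ (EuclideanSpace ℝ (Fin n))) :
    let proj : EuclideanSpace ℝ (Fin n) → EuclideanSpace ℝ (Fin n) :=
      fun x => (E.orthogonalProjectionOnto x : EuclideanSpace ℝ (Fin n))
    let mY : MeasurableSpace Ω :=
      MeasurableSpace.comap (fun ω => X ω + Real.sqrt s • Z ω) inferInstance
    let mYE : MeasurableSpace Ω :=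
      MeasurableSpace.comap (fun ω => proj (X ω) + Real.sqrt s • proj (Z ω)) inferInstance
    let A : Matrix (Fin n) (Fin n) ℝ := Matrix.of fun i j =>
      ∫ ω, ((P[fun ω => X ω i * X ω j | mY]) ω
        - (P[fun ω => X ω i | mY]) ω * (P[fun ω => X ω j | mY]) ω) ∂P
    let B : Matrix (Fin n) (Fin n) ℝ := Matrix.of fun i j =>
      ∫ ω, ((P[fun ω => proj (X ω) i * proj (X ω) j | mYE]) ω
        - (P[fun ω => proj (X ω) i | mYE]) ω * (P[fun ω => proj (X ω) j | mYE]) ω) ∂P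
    ∀ v : EuclideanSpace ℝ (Fin n),
      ∑ i, ∑ j, A i j * proj v j * proj v i ≤ ∑ i, ∑ j, B i j * v j * v i := by
  intro proj mY mYE A B v
  classical
  -- measurability facts
  have hproj_cont : Continuous proj :=
    continuous_subtype_val.comp E.orthogonalProjectionOnto.continuous
  have hproj_meas : Measurable proj := hproj_cont.measurable
  have hY_meas : Measurable[m0] fun ω => X ω + Real.sqrt s • Z ω :=
    hX.add (hZ.const_smul (Real.sqrt s))
  have hmY : mY ≤ m0 := hY_meas.comap_le
  have hYE_eq : (fun ω => proj (X ω) + Real.sqrt s • proj (Z ω))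
      = proj ∘ (fun ω => X ω + Real.sqrt s • Z ω) := by
    funext ω
    simp [proj, Function.comp, map_add, _root_.map_smul]
  have hmYE_le : mYE ≤ mY := by
    show MeasurableSpace.comap _ _ ≤ MeasurableSpace.comap _ _
    rw [hYE_eq, ← MeasurableSpace.comap_comp]
    exact MeasurableSpace.comap_mono hproj_meas.comap_le
  have hmYE : mYE ≤ m0 := hmYE_le.trans hmY
  -- self-adjointness of the projection, in coordinates
  have hswap : ∀ (a x : EuclideanSpace ℝ (Fin n)),
      ∑ i, a i * proj x i = ∑ i, proj a i * x i := by
    intro a x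
    have h := Submodule.inner_starProjection_left_eq_right E a x
    simpa [PiLp.inner_apply, RCLike.inner_apply, conj_trivial, proj, mul_comm] using h.symm
  have hcoord : ∀ (x : EuclideanSpace ℝ (Fin n)) (i : Fin n),
      proj x i = ∑ k, proj (EuclideanSpace.single i 1) k * x k := by
    intro x i
    have h := hswap (EuclideanSpace.single i 1) x
    rw [← h]
    simp [EuclideanSpace.single_apply]
  -- L² of the coordinates of proj ∘ X
  have hPX2 : ∀ i, MemLp (fun ω => proj (X ω) i) 2 P := by
    intro i
    have he : (fun ω => proj (X ω) i)
        = fun ω => ∑ k, proj (EuclideanSpace.single i 1) k * X ω k := by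
      funext ω; exact hcoord (X ω) i
    rw [he]
    exact memLp_finset_sum _ fun k _ => (hXL2 k).const_mul _
  -- the scalar test function
  set F : Ω → ℝ := fun ω => ∑ i, proj v i * X ω i with hFdef
  have hF2 : MemLp F 2 P := memLp_finset_sum _ fun i _ => (hXL2 i).const_mul _
  have hFeq : (fun ω => ∑ i, v i * proj (X ω) i) = F := by
    funext ω; exact hswap v (X ω)
  -- conditional expectations of the coordinates
  set g : Fin n → Ω → ℝ := fun i => P[fun ω => X ω i|mY] with hgdef
  set p : Fin n → Ω → ℝ := fun i => fun ω => proj (X ω) i with hpdef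
  set q : Fin n → Ω → ℝ := fun i => P[p i|mYE] with hqdef
  have hg2 : ∀ i, MemLp (g i) 2 P := fun i => my_memℒp_two_condexp hmY (hXL2 i)
  have hq2 : ∀ i, MemLp (q i) 2 P := fun i => my_memℒp_two_condexp hmYE (hPX2 i)
  -- left-hand side
  have hA : ∀ i j, A i j = (∫ ω, X ω i * X ω j ∂P) - ∫ ω, g i ω * g j ω ∂P := by
    intro i j
    show (∫ ω, ((P[fun ω => X ω i * X ω j | mY]) ω - g i ω * g j ω) ∂P) = _
    rw [integral_sub integrable_condExp (my_integrable_mul (hg2 i) (hg2 j)),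
      integral_condExp hmY]
  have hcondF : P[F|mY] =ᵐ[P] fun ω => ∑ i, proj v i * g i ω :=
    my_condexp_lincomb _ _ fun i => (hXL2 i).integrable one_le_two
  have hL : ∑ i, ∑ j, A i j * proj v j * proj v i
      = (∫ ω, F ω ^ 2 ∂P) - ∫ ω, (P[F|mY]) ω ^ 2 ∂P := by
    have h1 : ∑ i, ∑ j, A i j * proj v j * proj v i
        = ∑ i, ∑ j, ((proj v i * proj v j) * (∫ ω, X ω i * X ω j ∂P)
          - (proj v i * proj v j) * (∫ ω, g i ω * g j ω ∂P)) := by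
      refine Finset.sum_congr rfl fun i _ => Finset.sum_congr rfl fun j _ => ?_
      rw [hA i j]; ring
    rw [h1]
    have h2 : ∫ ω, (P[F|mY]) ω ^ 2 ∂P = ∫ ω, (∑ i, proj v i * g i ω) ^ 2 ∂P := by
      refine integral_congr_ae (hcondF.mono fun ω hω => ?_)
      simp only [hω]
    rw [h2, my_integral_sq_sum _ _ hXL2, my_integral_sq_sum _ _ hg2]
    rw [← Finset.sum_sub_distrib]
    exact Finset.sum_congr rfl fun i _ => Finset.sum_sub_distrib _ _
  -- right-hand side
  have hB : ∀ i j, B i j = (∫ ω, p i ω * p j ω ∂P) - ∫ ω, q i ω * q j ω ∂P := by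
    intro i j
    show (∫ ω, ((P[fun ω => p i ω * p j ω | mYE]) ω - q i ω * q j ω) ∂P) = _
    rw [integral_sub integrable_condExp (my_integrable_mul (hq2 i) (hq2 j)),
      integral_condExp hmYE]
  have hF'eq : F = fun ω => ∑ i, v i * p i ω := by
    funext ω; exact (hswap v (X ω)).symm
  have hcondF' : P[F|mYE] =ᵐ[P] fun ω => ∑ i, v i * q i ω := by
    rw [hF'eq]
    exact my_condexp_lincomb _ _ fun i => (hPX2 i).integrable one_le_two
  have hR : ∑ i, ∑ j, B i j * v j * v i
      = (∫ ω, F ω ^ 2 ∂P) - ∫ ω, (P[F|mYE]) ω ^ 2 ∂P := by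
    have h1 : ∑ i, ∑ j, B i j * v j * v i
        = ∑ i, ∑ j, ((v i * v j) * (∫ ω, p i ω * p j ω ∂P)
          - (v i * v j) * (∫ ω, q i ω * q j ω ∂P)) := by
      refine Finset.sum_congr rfl fun i _ => Finset.sum_congr rfl fun j _ => ?_
      rw [hB i j]; ring
    rw [h1]
    have h2 : ∫ ω, (P[F|mYE]) ω ^ 2 ∂P = ∫ ω, (∑ i, v i * q i ω) ^ 2 ∂P := by
      refine integral_congr_ae (hcondF'.mono fun ω hω => ?_)
      simp only [hω]
    have h3 : ∫ ω, F ω ^ 2 ∂P = ∫ ω, (∑ i, v i * p i ω) ^ 2 ∂P := by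
      rw [hF'eq]
    rw [h2, h3, my_integral_sq_sum _ _ hPX2, my_integral_sq_sum _ _ hq2]
    rw [← Finset.sum_sub_distrib]
    exact Finset.sum_congr rfl fun i _ => Finset.sum_sub_distrib _ _
  rw [hL, hR]
  exact sub_le_sub_left (my_integral_sq_condexp_le hmYE_le hmY hF2) _
end

section
/- Let A be a symmetric positive semi-definite n×n matrix with A ≤ Id and tr(A) ≥ n/2, where 3 divides n. Then there exists a subspace E ⊆ ℝⁿ of dimension n/3 such that Proj_E · A · Proj_E ≥ (1/4)·Proj_E. -/
open MeasureTheory Finset RealInnerProductSpace Matrix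

/-- If `A` is symmetric psd with `A ≤ Id` and `tr A ≥ n/2`, `3 ∣ n`, then there is a
subspace `E` of dimension `n/3` with `Proj_E · A · Proj_E ≥ (1/4)·Proj_E`. -/
theorem stmt10 (n : ℕ) (hn : 0 < n) (h3 : 3 ∣ n) (A : Matrix (Fin n) (Fin n) ℝ)
    (hA : A.PosSemidef)
    (hA1 : ((1 : Matrix (Fin n) (Fin n) ℝ) - A).PosSemidef)
    (htr : (n : ℝ) / 2 ≤ A.trace) :
    ∃ E : Submodule ℝ (EuclideanSpace ℝ (Fin n)),
      Module.finrank ℝ E = n / 3 ∧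
      ∀ v : EuclideanSpace ℝ (Fin n),
        (1 / 4 : ℝ) * ∑ i, ((Submodule.orthogonalProjectionOnto E v : EuclideanSpace ℝ (Fin n)) i) ^ 2 ≤
          ∑ i, ∑ j, A i j * (Submodule.orthogonalProjectionOnto E v : EuclideanSpace ℝ (Fin n)) j *
            (Submodule.orthogonalProjectionOnto E v : EuclideanSpace ℝ (Fin n)) i := by
  classical
  have hH : A.IsHermitian := hA.1
  set μ : Fin n → ℝ := hH.eigenvalues with hμdef
  set u := hH.eigenvectorBasis with hudef
  -- orthonormality as coordinate sums
  have hin : ∀ x y : EuclideanSpace ℝ (Fin n), (inner ℝ x y : ℝ) = ∑ i, x i * y i := by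
    intro x y
    simp [PiLp.inner_apply, RCLike.inner_apply, conj_trivial, mul_comm]
  have horth : ∀ k l : Fin n, ∑ i, u k i * u l i = if k = l then (1:ℝ) else 0 := by
    intro k l
    rw [← hin]
    exact orthonormal_iff_ite.mp u.orthonormal k l
  -- eigenvector equation, pointwise
  have heig : ∀ (k : Fin n) (i : Fin n), ∑ j, A i j * u k j = μ k * u k i := by
    intro k i
    have h := congrFun (hH.mulVec_eigenvectorBasis k) i
    simpa [Matrix.mulVec, dotProduct] using h
  -- eigenvalue bounds
  have h0 : ∀ k, 0 ≤ μ k := fun k => hA.eigenvalues_nonneg k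
  have h1 : ∀ k, μ k ≤ 1 := by
    intro k
    have h := hA1.dotProduct_mulVec_nonneg (⇑(u k))
    rw [Matrix.sub_mulVec, Matrix.one_mulVec, hH.mulVec_eigenvectorBasis k] at h
    have hd : (star (⇑(u k)) : Fin n → ℝ) ⬝ᵥ (⇑(u k) - μ k • ⇑(u k)) = 1 - μ k := by
      simp only [dotProduct, Pi.star_apply, star_trivial, Pi.sub_apply, Pi.smul_apply,
        smul_eq_mul, mul_sub, Finset.sum_sub_distrib, mul_left_comm, ← Finset.mul_sum]
      rw [horth k k]
      simp
    rw [hd] at h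
    linarith
  -- trace equals sum of eigenvalues
  have htr2 : A.trace = ∑ i, μ i := by
    rw [hH.trace_eq_sum_eigenvalues]
    simp [hμdef]
  rw [htr2] at htr
  -- counting argument
  obtain ⟨m, rfl⟩ := h3
  set S : Finset (Fin (3*m)) := Finset.univ.filter (fun i => (1/4:ℝ) ≤ μ i) with hSdef
  have hScard : m ≤ S.card := by
    have hsplit := Finset.sum_filter_add_sum_filter_not Finset.univ
      (fun i => (1/4:ℝ) ≤ μ i) μ
    have hb1 : ∑ i ∈ S, μ i ≤ S.card * 1 := by
      rw [mul_one]
      calc ∑ i ∈ S, μ i ≤ ∑ _i ∈ S, (1:ℝ) := Finset.sum_le_sum (fun i _ => h1 i)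
        _ = S.card := by simp
    have hb2 : ∑ i ∈ Finset.univ.filter (fun i => ¬ ((1/4:ℝ) ≤ μ i)), μ i
        ≤ (Finset.univ.filter (fun i => ¬ ((1/4:ℝ) ≤ μ i))).card * (1/4) := by
      calc ∑ i ∈ Finset.univ.filter (fun i => ¬ ((1/4:ℝ) ≤ μ i)), μ i
          ≤ ∑ _i ∈ Finset.univ.filter (fun i => ¬ ((1/4:ℝ) ≤ μ i)), (1/4:ℝ) := by
            refine Finset.sum_le_sum (fun i hi => ?_)
            have := (Finset.mem_filter.mp hi).2
            linarith [le_of_not_ge this]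
        _ = _ := by rw [Finset.sum_const, nsmul_eq_mul]
    have hcards : S.card + (Finset.univ.filter (fun i => ¬ ((1/4:ℝ) ≤ μ i))).card
        = 3 * m := by
      rw [hSdef, Finset.card_filter_add_card_filter_not]
      simp
    have hSle : S.card ≤ 3 * m := by omega
    have hreal : (3*m : ℝ) ≤ 3 * S.card := by
      have hc2 : ((Finset.univ.filter (fun i => ¬ ((1/4:ℝ) ≤ μ i))).card : ℝ)
          = (3*m : ℕ) - S.card := by
        push_cast [← hcards]; ring
      rw [hc2] at hb2
      rw [← hSdef] at hsplit
      push_cast at htr hb2 ⊢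
      linarith
    have : 3 * m ≤ 3 * S.card := by exact_mod_cast hreal
    omega
  obtain ⟨T, hTS, hTcard⟩ := Finset.exists_subset_card_eq hScard
  -- the subspace
  set E : Submodule ℝ (EuclideanSpace ℝ (Fin (3*m))) :=
    Submodule.span ℝ (Set.range (fun i : {i // i ∈ T} => (u i : EuclideanSpace ℝ (Fin (3*m)))))
    with hEdef
  have hli : LinearIndependent ℝ (fun i : {i // i ∈ T} => (u i : EuclideanSpace ℝ (Fin (3*m)))) :=
    (u.orthonormal.comp _ Subtype.coe_injective).linearIndependent
  refine ⟨E, ?_, ?_⟩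
  · rw [hEdef, finrank_span_eq_card hli, Fintype.card_coe, hTcard,
      Nat.mul_div_cancel_left m (by norm_num)]
  · -- key inequality for any w ∈ E
    have key : ∀ w : EuclideanSpace ℝ (Fin (3*m)), w ∈ E →
        (1 / 4 : ℝ) * ∑ i, (w i) ^ 2 ≤ ∑ i, ∑ j, A i j * w j * w i := by
      intro w hw
      set c : Fin (3*m) → ℝ := fun k => ∑ i, u k i * w i with hcdef
      have hc0 : ∀ k, k ∉ T → c k = 0 := by
        intro k hk
        have : ∑ i, u k i * w i = 0 := by
          induction hw using Submodule.span_induction with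
          | mem x hx =>
            obtain ⟨l, rfl⟩ := hx
            rw [horth k l]
            simp only [ite_eq_right_iff]
            intro hkl
            exact absurd (hkl ▸ l.2) hk
          | zero => simp
          | add x y hx hy ihx ihy =>
            simp only [PiLp.add_apply, mul_add, Finset.sum_add_distrib, ihx, ihy, add_zero]
          | smul a x hx ihx =>
            simp only [PiLp.smul_apply, smul_eq_mul, mul_left_comm, ← Finset.mul_sum, ihx,
              mul_zero]
        exact this
      have hcinner : ∀ k, (inner ℝ (u k) w : ℝ) = c k := fun k => hin _ _
      set y : EuclideanSpace ℝ (Fin (3*m)) :=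
        (WithLp.equiv 2 (Fin (3*m) → ℝ)).symm (fun i => ∑ j, A i j * w j) with hydef
      have hy : ∀ i, y i = ∑ j, A i j * w j := fun i => rfl
      have hky : ∀ k, (inner ℝ (u k) y : ℝ) = μ k * c k := by
        intro k
        rw [hin]
        calc ∑ i, u k i * y i = ∑ i, ∑ j, u k i * (A i j * w j) := by
              refine Finset.sum_congr rfl (fun i _ => ?_)
              rw [hy, Finset.mul_sum]
          _ = ∑ j, (∑ i, A j i * u k i) * w j := by
              rw [Finset.sum_comm]
              refine Finset.sum_congr rfl (fun j _ => ?_)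
              rw [Finset.sum_mul]
              refine Finset.sum_congr rfl (fun i _ => ?_)
              rw [← hH.apply j i]
              simp only [star_trivial]
              ring
          _ = μ k * c k := by
              simp only [heig k]
              rw [hcdef, Finset.mul_sum]
              refine Finset.sum_congr rfl (fun j _ => ?_)
              ring
      have hL : ∑ i, (w i) ^ 2 = ∑ k, c k * c k := by
        have hpar := u.sum_inner_mul_inner w w
        rw [hin w w] at hpar
        calc ∑ i, (w i) ^ 2 = ∑ i, w i * w i := by
              refine Finset.sum_congr rfl (fun i _ => ?_); ring
          _ = ∑ k, c k * c k := by
              rw [← hpar]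
              refine Finset.sum_congr rfl (fun k _ => ?_)
              rw [hcinner k, ← real_inner_comm w (u k), hcinner k]
      have hR : ∑ i, ∑ j, A i j * w j * w i = ∑ k, c k * (μ k * c k) := by
        have hpar := u.sum_inner_mul_inner w y
        rw [hin w y] at hpar
        calc ∑ i, ∑ j, A i j * w j * w i = ∑ i, w i * y i := by
              refine Finset.sum_congr rfl (fun i _ => ?_)
              rw [hy, ← Finset.sum_mul]
              ring
          _ = ∑ k, c k * (μ k * c k) := by
              rw [← hpar]
              refine Finset.sum_congr rfl (fun k _ => ?_)
              rw [hky k, ← real_inner_comm w (u k), hcinner k]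
      rw [hL, hR, Finset.mul_sum]
      refine Finset.sum_le_sum (fun k _ => ?_)
      by_cases hk : k ∈ T
      · have hμk : (1/4:ℝ) ≤ μ k := (Finset.mem_filter.mp (hTS hk)).2
        have : 0 ≤ c k * c k := mul_self_nonneg _
        nlinarith
      · rw [hc0 k hk]; simp
    intro v
    exact key _ (Submodule.orthogonalProjectionOnto E v).2
end

section
/- Among all central sections of an ellipsoid by subspaces of a fixed dimension k, the minimal k-dimensional volume is attained by the section spanned by the k shortest axes: if 𝓔 = {x : ∑ x_i²/a_i² ≤ 1} with a_1 ≤ … ≤ a_n, then for every k-dimensional subspace F, Vol_k(𝓔 ∩ F) ≥ Vol_k(B^k) · ∏_{i=1}^k a_i. -/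
open MeasureTheory Matrix Finset
open scoped RealInnerProductSpace

namespace Stmt11Aux

local notation "ε " σ:arg => ((Equiv.Perm.sign σ : ℤ) : ℝ)

variable {k n : ℕ}

private lemma det_sub_rows (C : Matrix (Fin n) (Fin k) ℝ) (f : Fin k → Fin n) :
    (C.submatrix f id).det = ∑ σ : Equiv.Perm (Fin k), ε σ * ∏ i, C (f (σ i)) i := by
  rw [Matrix.det_apply']
  rfl

private lemma det_sub_cols (C : Matrix (Fin n) (Fin k) ℝ) (f : Fin k → Fin n) :
    (C.submatrix f id).det = ∑ σ : Equiv.Perm (Fin k), ε σ * ∏ i, C (f i) (σ i) := by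
  rw [← Matrix.det_transpose, Matrix.det_apply']
  rfl

private lemma cb_step1 (C : Matrix (Fin n) (Fin k) ℝ) (w : Fin n → ℝ) :
    (Cᵀ * Matrix.diagonal w * C).det
      = ∑ f : Fin k → Fin n, (∏ i, w (f i) * C (f i) i) * (C.submatrix f id).det := by
  classical
  have hM : ∀ a b, (Cᵀ * Matrix.diagonal w * C) a b = ∑ j, C j a * w j * C j b := by
    intro a b
    rw [Matrix.mul_apply]
    refine Finset.sum_congr rfl fun j _ => ?_
    rw [Matrix.mul_diagonal, Matrix.transpose_apply]
  rw [Matrix.det_apply']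
  have h1 : ∀ σ : Equiv.Perm (Fin k),
      ∏ i, (Cᵀ * Matrix.diagonal w * C) (σ i) i
        = ∑ f : Fin k → Fin n, ∏ i, C (f i) (σ i) * w (f i) * C (f i) i := by
    intro σ
    have h2 : ∏ i, (Cᵀ * Matrix.diagonal w * C) (σ i) i
        = ∏ i, ∑ j, C j (σ i) * w j * C j i :=
      Finset.prod_congr rfl fun i _ => hM (σ i) i
    rw [h2, Finset.prod_univ_sum]
    rw [Fintype.piFinset_univ]
  calc
    ∑ σ : Equiv.Perm (Fin k), ε σ * ∏ i, (Cᵀ * Matrix.diagonal w * C) (σ i) i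
      = ∑ σ : Equiv.Perm (Fin k), ∑ f : Fin k → Fin n,
          (∏ i, w (f i) * C (f i) i) * (ε σ * ∏ i, C (f i) (σ i)) := by
        refine Finset.sum_congr rfl fun σ _ => ?_
        rw [h1 σ, Finset.mul_sum]
        refine Finset.sum_congr rfl fun f _ => ?_
        have : ∏ i, C (f i) (σ i) * w (f i) * C (f i) i
            = (∏ i, C (f i) (σ i)) * ∏ i, w (f i) * C (f i) i := by
          rw [← Finset.prod_mul_distrib]
          exact Finset.prod_congr rfl fun i _ => by ring
        rw [this]; ring
    _ = ∑ f : Fin k → Fin n, (∏ i, w (f i) * C (f i) i)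
          * ∑ σ : Equiv.Perm (Fin k), ε σ * ∏ i, C (f i) (σ i) := by
        rw [Finset.sum_comm]
        refine Finset.sum_congr rfl fun f _ => ?_
        rw [Finset.mul_sum]
    _ = ∑ f : Fin k → Fin n, (∏ i, w (f i) * C (f i) i) * (C.submatrix f id).det := by
        refine Finset.sum_congr rfl fun f _ => ?_
        rw [det_sub_cols]

private lemma cb (C : Matrix (Fin n) (Fin k) ℝ) (w : Fin n → ℝ) :
    (Nat.factorial k : ℝ) * (Cᵀ * Matrix.diagonal w * C).det
      = ∑ f : Fin k → Fin n, (∏ j, w (f j)) * (C.submatrix f id).det ^ 2 := by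
  classical
  have key : ∀ f : Fin k → Fin n,
      (∏ j, w (f j)) * (C.submatrix f id).det ^ 2
        = ∑ σ : Equiv.Perm (Fin k),
            (∏ i, w ((f ∘ σ) i) * C ((f ∘ σ) i) i) * (C.submatrix (f ∘ σ) id).det := by
    intro f
    have hperm : ∀ σ : Equiv.Perm (Fin k),
        (C.submatrix (f ∘ σ) id).det = ε σ * (C.submatrix f id).det := by
      intro σ
      have h0 : C.submatrix (f ∘ σ) id = (C.submatrix f id).submatrix σ id := rfl
      rw [h0, Matrix.det_permute]
    calc
      (∏ j, w (f j)) * (C.submatrix f id).det ^ 2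
        = (∏ j, w (f j)) *
            ((∑ σ : Equiv.Perm (Fin k), ε σ * ∏ i, C (f (σ i)) i) * (C.submatrix f id).det) := by
          rw [← det_sub_rows]; ring
      _ = ∑ σ : Equiv.Perm (Fin k),
            (∏ j, w (f j)) * ((ε σ * ∏ i, C (f (σ i)) i) * (C.submatrix f id).det) := by
          rw [Finset.sum_mul, Finset.mul_sum]
      _ = ∑ σ : Equiv.Perm (Fin k),
            (∏ i, w ((f ∘ σ) i) * C ((f ∘ σ) i) i) * (C.submatrix (f ∘ σ) id).det := by
          refine Finset.sum_congr rfl fun σ _ => ?_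
          rw [hperm σ]
          have hw : ∏ j, w (f j) = ∏ i, w (f (σ i)) := (Equiv.prod_comp σ fun j => w (f j)).symm
          have hsplit : ∏ i, w ((f ∘ σ) i) * C ((f ∘ σ) i) i
              = (∏ i, w (f (σ i))) * ∏ i, C (f (σ i)) i := by
            rw [← Finset.prod_mul_distrib]; rfl
          rw [hsplit, ← hw]; ring
  rw [Finset.sum_congr rfl fun f _ => key f, Finset.sum_comm]
  have hre : ∀ σ : Equiv.Perm (Fin k),
      ∑ f : Fin k → Fin n,
          (∏ i, w ((f ∘ σ) i) * C ((f ∘ σ) i) i) * (C.submatrix (f ∘ σ) id).det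
        = ∑ g : Fin k → Fin n, (∏ i, w (g i) * C (g i) i) * (C.submatrix g id).det := by
    intro σ
    refine Fintype.sum_bijective (fun f : Fin k → Fin n => f ∘ σ) ?_ _ _ fun f => rfl
    constructor
    · intro f g h
      funext i
      have := congrFun h (σ.symm i)
      simpa using this
    · intro g
      exact ⟨g ∘ σ.symm, by funext i; simp⟩
  rw [Finset.sum_congr rfl fun σ _ => hre σ, Finset.sum_const, Finset.card_univ, nsmul_eq_mul,
    cb_step1]
  norm_num [Fintype.card_perm]

private lemma prod_w_le (hk : k ≤ n) (w : Fin n → ℝ) (hw0 : ∀ i, 0 ≤ w i) (hwa : Antitone w)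
    (f : Fin k → Fin n) (hf : Function.Injective f) :
    ∏ j, w (f j) ≤ ∏ j : Fin k, w (Fin.castLE hk j) := by
  classical
  set s : Finset (Fin n) := Finset.univ.image f with hs
  have hcard : s.card = k := by
    rw [hs, Finset.card_image_of_injective _ hf, Finset.card_univ, Fintype.card_fin]
  set e : Fin k → Fin n := fun j => s.orderEmbOfFin hcard j with he
  have h1 : ∏ j, w (f j) = ∏ j, w (e j) := by
    have hA : ∏ j, w (f j) = ∏ x ∈ s, w x := by
      rw [hs, Finset.prod_image fun x _ y _ h => hf h]
    have himg : Finset.univ.image e = s := by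
      apply Finset.coe_injective
      rw [Finset.coe_image, Finset.coe_univ, Set.image_univ]
      exact Finset.range_orderEmbOfFin s hcard
    have hB : ∏ j, w (e j) = ∏ x ∈ s, w x := by
      rw [← himg, Finset.prod_image fun x _ y _ h => (s.orderEmbOfFin hcard).injective h]
    rw [hA, hB]
  have hsm : StrictMono fun j : Fin k => ((e j : Fin n) : ℕ) := by
    intro x y hxy
    exact (s.orderEmbOfFin hcard).strictMono hxy
  have aux : ∀ m : ℕ, ∀ hm : m < k, m ≤ ((e ⟨m, hm⟩ : Fin n) : ℕ) := by
    intro m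
    induction m with
    | zero => intro hm; exact Nat.zero_le _
    | succ p ih =>
      intro hm
      have hp : p < k := Nat.lt_of_succ_lt hm
      have h3 : ((e ⟨p, hp⟩ : Fin n) : ℕ) < ((e ⟨p + 1, hm⟩ : Fin n) : ℕ) :=
        hsm (show (⟨p, hp⟩ : Fin k) < ⟨p + 1, hm⟩ by simp [Fin.lt_def])
      have h4 := ih hp
      omega
  have h2 : ∀ j : Fin k, w (e j) ≤ w (Fin.castLE hk j) := by
    intro j
    apply hwa
    rw [Fin.le_def]
    have := aux j j.isLt
    simpa using this
  rw [h1]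
  exact Finset.prod_le_prod (fun j _ => hw0 _) fun j _ => h2 j

private lemma det_le (hk : k ≤ n) (C : Matrix (Fin n) (Fin k) ℝ) (hC : Cᵀ * C = 1)
    (w : Fin n → ℝ) (hw0 : ∀ i, 0 ≤ w i) (hwa : Antitone w) :
    (Cᵀ * Matrix.diagonal w * C).det ≤ ∏ j : Fin k, w (Fin.castLE hk j) := by
  classical
  have hfac : (0 : ℝ) < (Nat.factorial k : ℝ) := by
    exact_mod_cast Nat.factorial_pos k
  rw [← mul_le_mul_iff_right₀ hfac, cb]
  have hone : ∑ f : Fin k → Fin n, (C.submatrix f id).det ^ 2 = (Nat.factorial k : ℝ) := by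
    have h := cb C fun _ => (1 : ℝ)
    simp only [Matrix.diagonal_one, Matrix.mul_one, hC, Matrix.det_one, mul_one,
      Finset.prod_const_one, one_mul] at h
    exact h.symm
  calc
    ∑ f : Fin k → Fin n, (∏ j, w (f j)) * (C.submatrix f id).det ^ 2
      ≤ ∑ f : Fin k → Fin n,
          (∏ j : Fin k, w (Fin.castLE hk j)) * (C.submatrix f id).det ^ 2 := by
        refine Finset.sum_le_sum fun f _ => ?_
        by_cases hf : Function.Injective f
        · exact mul_le_mul_of_nonneg_right (prod_w_le hk w hw0 hwa f hf) (sq_nonneg _)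
        · obtain ⟨i, j, hfij, hij⟩ := Function.not_injective_iff.1 hf
          have hdz : (C.submatrix f id).det = 0 := by
            refine Matrix.det_zero_of_row_eq hij ?_
            funext l
            simp [Matrix.submatrix_apply, hfij]
          rw [hdz]
          simp
    _ = (∏ j : Fin k, w (Fin.castLE hk j)) * ∑ f : Fin k → Fin n, (C.submatrix f id).det ^ 2 := by
        rw [Finset.mul_sum]
    _ = (Nat.factorial k : ℝ) * ∏ j : Fin k, w (Fin.castLE hk j) := by
        rw [hone]; ring

end Stmt11Aux

open Stmt11Aux in
/-- Among all central `k`-dimensional sections of the ellipsoid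
`𝓔 = {x : ∑ xᵢ²/aᵢ² ≤ 1}` with `a₁ ≤ … ≤ aₙ`, the minimal volume is attained by the
section spanned by the `k` shortest axes: every `k`-dimensional subspace (here the image
of a linear isometry `J` from ℝᵏ) satisfies `Vol_k(𝓔 ∩ F) ≥ Vol_k(Bᵏ)·∏_{i≤k} aᵢ`. -/
theorem stmt11 (n k : ℕ) (hk : k ≤ n) (a : Fin n → ℝ) (hpos : ∀ i, 0 < a i)
    (hmono : Monotone a)
    (J : EuclideanSpace ℝ (Fin k) →ₗᵢ[ℝ] EuclideanSpace ℝ (Fin n)) :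
    volume (Metric.closedBall (0 : EuclideanSpace ℝ (Fin k)) 1)
        * ENNReal.ofReal (∏ i : Fin k, a (Fin.castLE hk i)) ≤
      volume (⇑J ⁻¹' {x : EuclideanSpace ℝ (Fin n) | ∑ i, (x i) ^ 2 / (a i) ^ 2 ≤ 1}) := by
  classical
  set w : Fin n → ℝ := fun i => (a i)⁻¹ ^ 2 with hwdef
  have hw0 : ∀ i, 0 < w i := fun i => pow_pos (inv_pos.2 (hpos i)) 2
  have hwa : Antitone w := by
    intro i j hij
    exact pow_le_pow_left₀ (inv_nonneg.2 (hpos j).le)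
      (inv_anti₀ (hpos i) (hmono hij)) 2
  set bk := (EuclideanSpace.basisFun (Fin k) ℝ).toBasis with hbk
  set bn := (EuclideanSpace.basisFun (Fin n) ℝ).toBasis with hbn
  set C : Matrix (Fin n) (Fin k) ℝ := LinearMap.toMatrix bk bn J.toLinearMap with hCdef
  have hmv : ∀ (y : EuclideanSpace ℝ (Fin k)) (i : Fin n), (C *ᵥ fun j => y j) i = J y i := by
    intro y i
    have h := LinearMap.toMatrix_mulVec_repr (R := ℝ) bk bn J.toLinearMap y
    have h2 : (fun j => y j) = ⇑(bk.repr y) := by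
      funext j
      rw [hbk]
      simp [EuclideanSpace.basisFun_repr]
    rw [h2]
    rw [← hCdef] at h
    rw [h, hbn]
    simp [EuclideanSpace.basisFun_repr]
  have hCapp : ∀ (i : Fin n) (j : Fin k), C i j = J (EuclideanSpace.single j 1) i := by
    intro i j
    rw [hCdef, LinearMap.toMatrix_apply, hbn, hbk]
    simp [EuclideanSpace.basisFun_repr, OrthonormalBasis.coe_toBasis,
      EuclideanSpace.basisFun_apply]
  have hCtC : Cᵀ * C = 1 := by
    ext p q
    have h := J.inner_map_map (EuclideanSpace.single p (1 : ℝ)) (EuclideanSpace.single q 1)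
    rw [PiLp.inner_apply] at h
    simp only [EuclideanSpace.inner_single_left, _root_.map_one, one_mul, RCLike.inner_apply,
      conj_trivial, EuclideanSpace.single_apply] at h
    rw [Matrix.mul_apply, Matrix.one_apply]
    calc ∑ i, Cᵀ p i * C i q = ∑ i, J (EuclideanSpace.single p (1:ℝ)) i
        * J (EuclideanSpace.single q (1:ℝ)) i := by
          refine Finset.sum_congr rfl fun i _ => ?_
          rw [Matrix.transpose_apply, hCapp, hCapp]
      _ = if p = q then 1 else 0 := by
          rw [← h]; exact Finset.sum_congr rfl fun i _ => mul_comm _ _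
          try by_cases hpq : p = q <;> simp [hpq, eq_comm]
  set M : Matrix (Fin k) (Fin k) ℝ := Cᵀ * Matrix.diagonal w * C with hMdef
  have hquad0 : ∀ v : Fin k → ℝ, v ⬝ᵥ (M *ᵥ v) = ∑ i, w i * ((C *ᵥ v) i) ^ 2 := by
    intro v
    rw [hMdef, ← Matrix.mulVec_mulVec, ← Matrix.mulVec_mulVec, Matrix.dotProduct_mulVec,
      Matrix.vecMul_transpose]
    simp only [dotProduct, Matrix.mulVec_diagonal]
    refine Finset.sum_congr rfl fun i _ => ?_
    ring
  have hquad : ∀ y : EuclideanSpace ℝ (Fin k),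
      (fun j => y j) ⬝ᵥ (M *ᵥ fun j => y j) = ∑ i, (J y i) ^ 2 / (a i) ^ 2 := by
    intro y
    rw [hquad0]
    refine Finset.sum_congr rfl fun i _ => ?_
    rw [hmv y i, hwdef]
    rw [div_eq_mul_inv, ← inv_pow]
    ring
  have hherm : M.IsHermitian := by
    show Mᴴ = M
    rw [hMdef]
    simp only [Matrix.conjTranspose_mul, Matrix.conjTranspose_eq_transpose_of_trivial,
      Matrix.transpose_mul, Matrix.transpose_transpose, Matrix.diagonal_transpose,
      Matrix.mul_assoc]
  have hMpd : M.PosDef := by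
    refine Matrix.PosDef.of_dotProduct_mulVec_pos hherm fun x hx => ?_
    have hstar : star x = x := by
      funext j; simp
    rw [hstar, hquad0]
    have hex : ∃ i, (C *ᵥ x) i ≠ 0 := by
      by_contra hall
      push_neg at hall
      set y : EuclideanSpace ℝ (Fin k) := (WithLp.equiv 2 (Fin k → ℝ)).symm x with hy
      have hJy : ∀ i, J y i = 0 := by
        intro i
        rw [← hmv y i]
        exact hall i
      have hny : ‖J y‖ = 0 := by
        rw [EuclideanSpace.norm_eq]
        simp [hJy]
      have hy0 : y = 0 := by
        rw [← norm_eq_zero, ← J.norm_map y]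
        exact hny
      apply hx
      funext j
      have := congrFun (congrArg (fun z : EuclideanSpace ℝ (Fin k) => (z : Fin k → ℝ)) hy0) j
      exact this
    obtain ⟨i0, hi0⟩ := hex
    refine Finset.sum_pos' (fun i _ => mul_nonneg (hw0 i).le (sq_nonneg _)) ⟨i0, Finset.mem_univ _, ?_⟩
    exact mul_pos (hw0 i0) ((sq_nonneg _).lt_of_ne (Ne.symm (pow_ne_zero 2 hi0)))
  have hpsd := hMpd.posSemidef
  open scoped MatrixOrder in set S : Matrix (Fin k) (Fin k) ℝ := CFC.sqrt M with hSdef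
  have hS_herm : S.IsHermitian := by open scoped MatrixOrder in exact (CFC.sqrt_nonneg M).posSemidef.1
  have hSt : Sᵀ = S := by
    rw [← Matrix.conjTranspose_eq_transpose_of_trivial]
    exact hS_herm
  have hSS : S * S = M := by open scoped MatrixOrder in exact CFC.sqrt_mul_sqrt_self M hpsd.nonneg
  have hdetM_pos : 0 < M.det := hMpd.det_pos
  have hdetS_sq : S.det * S.det = M.det := by rw [← Matrix.det_mul, hSS]
  have hdetS_nonneg : 0 ≤ S.det := by
    have h := hS_herm.det_eq_prod_eigenvalues
    have h2 : 0 ≤ ∏ i, hS_herm.eigenvalues i :=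
      Finset.prod_nonneg fun i _ => by open scoped MatrixOrder in exact (CFC.sqrt_nonneg M).posSemidef.eigenvalues_nonneg i
    rw [h]
    exact_mod_cast h2
  have hdetS_pos : 0 < S.det := by
    rcases hdetS_nonneg.lt_or_eq with h | h
    · exact h
    · exfalso
      rw [← h] at hdetS_sq
      rw [← hdetS_sq] at hdetM_pos
      simp at hdetM_pos
  have hnorm : ∀ y : EuclideanSpace ℝ (Fin k),
      ‖Matrix.toEuclideanLin S y‖ ^ 2 = (fun j => y j) ⬝ᵥ (M *ᵥ fun j => y j) := by
    intro y
    rw [← real_inner_self_eq_norm_sq, PiLp.inner_apply]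
    have happ : ∀ i, (Matrix.toEuclideanLin S y) i = (S *ᵥ fun j => y j) i := fun i => rfl
    calc ∑ i, (inner ℝ ((Matrix.toEuclideanLin S y) i) ((Matrix.toEuclideanLin S y) i) : ℝ)
        = (S *ᵥ fun j => y j) ⬝ᵥ (S *ᵥ fun j => y j) := by
          refine Finset.sum_congr rfl fun i _ => ?_
          rw [happ i, RCLike.inner_apply, conj_trivial]
      _ = (fun j => y j) ⬝ᵥ (M *ᵥ fun j => y j) := by
          have hvm : (fun j => y j) ᵥ* S = S *ᵥ (fun j => y j) := by
            conv_lhs => rw [← hSt]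
            rw [Matrix.vecMul_transpose]
          have hstep : (fun j => y j) ⬝ᵥ (M *ᵥ fun j => y j)
              = (S *ᵥ fun j => y j) ⬝ᵥ (S *ᵥ fun j => y j) := by
            conv_lhs => rw [← hSS, ← Matrix.mulVec_mulVec, Matrix.dotProduct_mulVec, hvm]
          exact hstep.symm
  have hset : ⇑J ⁻¹' {x : EuclideanSpace ℝ (Fin n) | ∑ i, (x i) ^ 2 / (a i) ^ 2 ≤ 1}
      = ⇑(Matrix.toEuclideanLin S) ⁻¹' Metric.closedBall 0 1 := by
    ext y
    simp only [Set.mem_preimage, Set.mem_setOf_eq, Metric.mem_closedBall, dist_zero_right]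
    rw [← hquad y, ← hnorm y, ← pow_le_one_iff_of_nonneg (norm_nonneg _) two_ne_zero]
  have hdetL : LinearMap.det (Matrix.toEuclideanLin S) = S.det := by
    rw [Matrix.toEuclideanLin_eq_toLin_orthonormal, LinearMap.det_toLin]
  have hdetL_ne : LinearMap.det (Matrix.toEuclideanLin S) ≠ 0 := by
    rw [hdetL]; exact hdetS_pos.ne'
  rw [hset, MeasureTheory.Measure.addHaar_preimage_linearMap (volume) hdetL_ne, hdetL]
  have hdetle : M.det ≤ ∏ j : Fin k, w (Fin.castLE hk j) :=
    det_le hk C hCtC w (fun i => (hw0 i).le) hwa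
  set P : ℝ := ∏ j : Fin k, (a (Fin.castLE hk j))⁻¹ with hP
  have hPpos : 0 < P := Finset.prod_pos fun j _ => inv_pos.2 (hpos _)
  have hwP : ∏ j : Fin k, w (Fin.castLE hk j) = P * P := by
    rw [hP, ← Finset.prod_mul_distrib]
    refine Finset.prod_congr rfl fun j _ => ?_
    simp only [hwdef]
    ring
  have hSP : S.det ≤ P := by
    have h3 : S.det * S.det ≤ P * P := by
      rw [hdetS_sq]
      rw [hwP] at hdetle
      exact hdetle
    nlinarith [h3, hdetS_nonneg, hPpos]
  have hkey : ∏ i : Fin k, a (Fin.castLE hk i) ≤ (S.det)⁻¹ := by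
    have h1 : P⁻¹ ≤ (S.det)⁻¹ := inv_anti₀ hdetS_pos hSP
    have h2 : P⁻¹ = ∏ i : Fin k, a (Fin.castLE hk i) := by
      rw [hP, ← Finset.prod_inv_distrib]
      exact Finset.prod_congr rfl fun j _ => inv_inv _
    rw [← h2]
    exact h1
  rw [abs_inv, abs_of_pos hdetS_pos, mul_comm]
  exact mul_le_mul_left (ENNReal.ofReal_le_ofReal hkey) _
end
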